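/- There is a Poisson-commutative subalgebra of polynomial functions on gl(N,ℝ)* containing, for each 1 ≤ k ≤ N, the k nontrivial coefficients of det(λ − u)_k; in particular the N(N+1)/2 functions {coefficients of det(λ−u)_k : 1 ≤ k ≤ N} pairwise Poisson-commute and their number equals N(N+1)/2. -/

import Mathlib

/-- The coordinate function `u^{ij}` on `gl(N,ℝ)*`. -/
noncomputable def u {N : ℕ} (i j : Fin N) : MvPolynomial (Fin N × Fin N) ℝ :=
  MvPolynomial.X (i, j)

/-- The Lie–Poisson bracket on polynomial functions on `gl(N,ℝ)*`. -/
noncomputable def pb {N : ℕ} (P Q : MvPolynomial (Fin N × Fin N) ℝ) :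
    MvPolynomial (Fin N × Fin N) ℝ :=
  ∑ i : Fin N, ∑ j : Fin N, ∑ k : Fin N, ∑ l : Fin N,
    MvPolynomial.pderiv (i, j) P * MvPolynomial.pderiv (k, l) Q *
      ((if j = k then u i l else 0) - (if l = i then u k j else 0))

/-- The matrix of coordinate functions `u = (u^{ij})`. -/
noncomputable def Umat (N : ℕ) :
    Matrix (Fin N) (Fin N) (MvPolynomial (Fin N × Fin N) ℝ) :=
  fun i j => u i j

/-- `I_k(λ) = det(λ − u)_k`, the k-th leading principal minor of `λ·Id − u`. -/
noncomputable def Ipoly {N : ℕ} (k : ℕ) (hk : k ≤ N) :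
    Polynomial (MvPolynomial (Fin N × Fin N) ℝ) :=
  (((Umat N).charmatrix).submatrix (Fin.castLE hk) (Fin.castLE hk)).det

/-!
Write `M = λ·Id − u_k` for the leading `k × k` block of `λ·Id − u`. By Jacobi's formula
`∂ det M / ∂u^{ab} = −adj(M)_{ba}` for `a, b < k`, so for `i, j < k` the bracket `{u^{ij}, I_k}` is
the `(i, j)` entry of `adj(M)·u_k − u_k·adj(M)`. This vanishes because `u_k = λ − M` commutes
with `adj M`: `I_k` is a Casimir of `gl(k)`. The coefficients of `I_k` involve only the `u^{ij}`
with `i, j < k`, and `{·, I_l}` is a derivation, so for `k ≤ l` they Poisson-commute with the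
coefficients of `I_l`. The bracket being a biderivation, the algebra they generate is
Poisson-commutative.
-/

open Polynomial Matrix Finset

namespace Derivation

section Product

variable {R A M : Type*} [CommSemiring R] [CommRing A] [AddCommGroup M] [Algebra R A]
  [Module A M] [Module R M]

theorem leibniz_finsetProd {ι : Type*} [DecidableEq ι] (D : Derivation R A M) (s : Finset ι)
    (f : ι → A) : D (∏ i ∈ s, f i) = ∑ i ∈ s, (∏ j ∈ s.erase i, f j) • D (f i) := by
  induction s using Finset.induction_on with
  | empty => simp
  | insert a s ha ih =>
    rw [prod_insert ha, leibniz, ih, sum_insert ha, erase_insert ha, smul_sum, add_comm]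
    congr 1
    refine sum_congr rfl fun i hi => ?_
    rw [erase_insert_of_ne (ne_of_mem_of_not_mem hi ha).symm,
      prod_insert fun h => ha (mem_of_mem_erase h), mul_smul]

end Product

variable {n : Type*} [Fintype n] [DecidableEq n]

theorem apply_det {R A : Type*} [CommSemiring R] [CommRing A] [Algebra R A]
    (D : Derivation R A A) (M : Matrix n n A) : D M.det = trace (M.adjugate * M.map D) := by
  have expand_col (j : n) :
      ∑ i, M.adjugate j i * D (M i j) = (M.updateCol j fun i => D (M i j)).det := by
    rw [← cramer_apply, cramer_eq_adjugate_mulVec]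
    rfl
  have sign_const (z : ℤ) : D (z : A) = 0 := by
    rw [← zsmul_one, map_zsmul, D.map_one_eq_zero, smul_zero]
  simp only [trace, diag_apply, mul_apply, map_apply, expand_col, det_apply', map_sum]
  rw [sum_comm]
  refine sum_congr rfl fun σ _ => ?_
  rw [leibniz, sign_const, smul_zero, add_zero, leibniz_finsetProd, smul_eq_mul, mul_sum]
  refine sum_congr rfl fun j _ => ?_
  rw [← mul_prod_erase univ _ (mem_univ j), updateCol_self, smul_eq_mul, mul_comm (D _)]
  congr 2
  exact prod_congr rfl fun i hi => by rw [updateCol_ne (ne_of_mem_erase hi)]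

variable {R A : Type*} [CommRing R] [CommRing A] [Algebra R A]

noncomputable def coeffwise (d : Derivation R A A) : Derivation R A[X] A[X] :=
  (PolynomialModule.equivPolynomialSelf (R := A)).toLinearMap.compDer d.mapCoeffs

@[simp]
theorem coeff_coeffwise (d : Derivation R A A) (p : A[X]) (k : ℕ) :
    (d.coeffwise p).coeff k = d (p.coeff k) :=
  rfl

@[simp]
theorem coeffwise_C (d : Derivation R A A) (a : A) : d.coeffwise (C a) = C (d a) := by
  ext k
  simp [coeff_C, apply_ite d]

@[simp]
theorem coeffwise_X (d : Derivation R A A) : d.coeffwise (X : A[X]) = 0 := by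
  ext k
  simp [coeff_X, apply_ite d]

theorem coeffwise_charpoly (d : Derivation R A A) (M : Matrix n n A) :
    d.coeffwise M.charpoly = -trace ((charmatrix M).adjugate * (M.map d).map C) := by
  have entries : (charmatrix M).map d.coeffwise = -(M.map d).map C := by
    ext i j : 1
    simp [charmatrix_apply, diagonal_apply, apply_ite d.coeffwise]
  rw [charpoly, apply_det, entries, mul_neg, trace_neg]

theorem apply_coeff_charpoly (d : Derivation R A A) (M : Matrix n n A) (k : ℕ) :
    d (M.charpoly.coeff k) = -∑ i, ∑ j, ((charmatrix M).adjugate i j).coeff k * d (M j i) := by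
  rw [← coeff_coeffwise, coeffwise_charpoly]
  simp [trace, mul_apply, finsetSum_coeff, coeff_mul_C]

end Derivation

namespace Matrix

variable {R : Type*} [CommRing R] {n : Type*} [Fintype n] [DecidableEq n]

theorem map_C_mul_adjugate_charmatrix (M : Matrix n n R) :
    M.map C * (charmatrix M).adjugate = (charmatrix M).adjugate * M.map C := by
  have hM : M.map C = scalar n X - charmatrix M := by simp [charmatrix]
  rw [hM, sub_mul, mul_sub, mul_adjugate, adjugate_mul,
    (scalar_commute X (fun _ => Commute.all _ _) _).eq]

theorem charmatrix_submatrix {m : Type*} [Fintype m] [DecidableEq m] (M : Matrix n n R)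
    {e : m → n} (he : Function.Injective e) :
    charmatrix (M.submatrix e e) = (charmatrix M).submatrix e e := by
  ext i j : 1
  simp [charmatrix_apply, diagonal_apply, he.eq_iff]

end Matrix

theorem Finset.sum_Icc_one_id (n : ℕ) : ∑ k ∈ Icc 1 n, k = n * (n + 1) / 2 := by
  calc ∑ k ∈ Icc 1 n, k = ∑ k ∈ range (n + 1), k := by
        rw [range_eq_Ico, sum_eq_sum_Ico_succ_bot n.zero_lt_succ, zero_add, zero_add,
          Nat.succ_eq_add_one, Ico_add_one_right_eq_Icc]
    _ = n * (n + 1) / 2 := by rw [sum_range_id, Nat.add_sub_cancel, mul_comm]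

section LiePoisson

variable {N : ℕ}

@[simp]
theorem Umat_apply (i j : Fin N) : Umat N i j = u i j :=
  rfl

theorem pderiv_u (v : Fin N × Fin N) (i j : Fin N) :
    MvPolynomial.pderiv v (u i j) = if (i, j) = v then 1 else 0 := by
  simp [u, MvPolynomial.pderiv_X, Pi.single_apply]

theorem pb_u_left (i j : Fin N) (Q : MvPolynomial (Fin N × Fin N) ℝ) :
    pb (u i j) Q = ∑ m, MvPolynomial.pderiv (j, m) Q * u i m
      - ∑ m, MvPolynomial.pderiv (m, i) Q * u m j := by
  simp only [pb, pderiv_u, Prod.mk.injEq, ite_and, ite_mul, one_mul, zero_mul, sum_ite_irrel,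
    sum_const_zero, sum_ite_eq, mem_univ, if_true, mul_sub, sum_sub_distrib, mul_ite, mul_zero,
    sum_ite_eq']

theorem pb_eq_sum_pderiv_mul_pb_u (P Q : MvPolynomial (Fin N × Fin N) ℝ) :
    pb P Q = ∑ i, ∑ j, MvPolynomial.pderiv (i, j) P * pb (u i j) Q := by
  simp only [pb_u_left]
  rw [pb]
  simp only [mul_sub, sum_sub_distrib, mul_ite, mul_zero, sum_ite_irrel, sum_const_zero,
    sum_ite_eq, sum_ite_eq', mem_univ, if_true, mul_sum, mul_assoc]

theorem pb_antisymm (P Q : MvPolynomial (Fin N × Fin N) ℝ) : pb P Q = -pb Q P := by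
  have sum_pairs (P Q : MvPolynomial (Fin N × Fin N) ℝ) : pb P Q =
      ∑ p : Fin N × Fin N, ∑ q : Fin N × Fin N,
        MvPolynomial.pderiv p P * MvPolynomial.pderiv q Q *
          ((if p.2 = q.1 then u p.1 q.2 else 0) - if q.2 = p.1 then u q.1 p.2 else 0) := by
    simp only [pb, Fintype.sum_prod_type]
  rw [sum_pairs, sum_pairs, sum_comm, ← sum_neg_distrib]
  refine sum_congr rfl fun q _ => ?_
  rw [← sum_neg_distrib]
  exact sum_congr rfl fun p _ => by ring

noncomputable def hamiltonianDerivation (Q : MvPolynomial (Fin N × Fin N) ℝ) :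
    Derivation ℝ (MvPolynomial (Fin N × Fin N) ℝ) (MvPolynomial (Fin N × Fin N) ℝ) :=
  ∑ i, ∑ j, pb (u i j) Q • MvPolynomial.pderiv (i, j)

theorem hamiltonianDerivation_apply (Q P : MvPolynomial (Fin N × Fin N) ℝ) :
    hamiltonianDerivation Q P = pb P Q := by
  rw [pb_eq_sum_pderiv_mul_pb_u, hamiltonianDerivation, ← Derivation.coeFnAddMonoidHom_apply,
    map_sum]
  simp [Finset.sum_apply, map_sum, mul_comm]

theorem pb_eq_zero_of_mem_adjoin {s : Set (MvPolynomial (Fin N × Fin N) ℝ)}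
    (hs : ∀ p ∈ s, ∀ q ∈ s, pb p q = 0) {p q : MvPolynomial (Fin N × Fin N) ℝ}
    (hp : p ∈ Algebra.adjoin ℝ s) (hq : q ∈ Algebra.adjoin ℝ s) : pb p q = 0 := by
  have adjoin_left (Q) (hQ : ∀ x ∈ s, pb x Q = 0) {P} (hP : P ∈ Algebra.adjoin ℝ s) :
      pb P Q = 0 := by
    have := Derivation.eqOn_adjoin (D1 := hamiltonianDerivation Q) (D2 := 0)
      (fun x hx => by simpa [hamiltonianDerivation_apply] using hQ x hx) hP
    simpa [hamiltonianDerivation_apply] using this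
  refine adjoin_left q (fun x hx => ?_) hp
  rw [pb_antisymm, adjoin_left x (hs · · x hx) hq, neg_zero]

variable {ι : Type*} [Fintype ι] [DecidableEq ι]

theorem pderiv_coeff_charpoly_submatrix_eq_zero (e : ι → Fin N) {a b : Fin N}
    (h : a ∉ Set.range e ∨ b ∉ Set.range e) (k : ℕ) :
    MvPolynomial.pderiv (a, b) (((Umat N).submatrix e e).charpoly.coeff k) = 0 := by
  rw [Derivation.apply_coeff_charpoly, neg_eq_zero]
  refine sum_eq_zero fun i _ => sum_eq_zero fun j _ => ?_
  rw [submatrix_apply, Umat_apply, pderiv_u, if_neg, mul_zero]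
  rintro ⟨⟩
  simp at h

theorem pderiv_coeff_charpoly_submatrix {e : ι → Fin N} (he : Function.Injective e) (a b : ι)
    (k : ℕ) : MvPolynomial.pderiv (e a, e b) (((Umat N).submatrix e e).charpoly.coeff k) =
      -((charmatrix ((Umat N).submatrix e e)).adjugate b a).coeff k := by
  simp [Derivation.apply_coeff_charpoly, pderiv_u, he.eq_iff, ite_and]

theorem pb_u_coeff_charpoly_submatrix {e : ι → Fin N} (he : Function.Injective e) (i j : ι)
    (k : ℕ) : pb (u (e i) (e j)) (((Umat N).submatrix e e).charpoly.coeff k) = 0 := by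
  have u_comm_adjugate := congrArg (fun M => (M i j).coeff k)
    (map_C_mul_adjugate_charmatrix ((Umat N).submatrix e e))
  simp only [mul_apply, map_apply, submatrix_apply, Umat_apply, finsetSum_coeff, coeff_C_mul,
    coeff_mul_C] at u_comm_adjugate
  set Q := ((Umat N).submatrix e e).charpoly.coeff k
  have restrict_left : ∑ m, MvPolynomial.pderiv (e j, m) Q * u (e i) m =
      ∑ r, MvPolynomial.pderiv (e j, e r) Q * u (e i) (e r) :=
    (Fintype.sum_of_injective e he _ _ (fun m hm => by
      rw [pderiv_coeff_charpoly_submatrix_eq_zero e (Or.inr hm), zero_mul]) fun _ => rfl).symm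
  have restrict_right : ∑ m, MvPolynomial.pderiv (m, e i) Q * u m (e j) =
      ∑ r, MvPolynomial.pderiv (e r, e i) Q * u (e r) (e j) :=
    (Fintype.sum_of_injective e he _ _ (fun m hm => by
      rw [pderiv_coeff_charpoly_submatrix_eq_zero e (Or.inl hm), zero_mul]) fun _ => rfl).symm
  rw [pb_u_left, restrict_left, restrict_right]
  simp only [Q, pderiv_coeff_charpoly_submatrix he, neg_mul, sum_neg_distrib, sub_neg_eq_add]
  rw [neg_add_eq_zero, ← u_comm_adjugate]
  exact sum_congr rfl fun _ _ => mul_comm _ _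

theorem pb_coeff_charpoly_submatrix {κ : Type*} [Fintype κ] [DecidableEq κ] (e : ι → Fin N)
    {f : κ → Fin N} (hf : Function.Injective f) (hef : Set.range e ⊆ Set.range f) (m n : ℕ) :
    pb (((Umat N).submatrix e e).charpoly.coeff m) (((Umat N).submatrix f f).charpoly.coeff n)
      = 0 := by
  rw [pb_eq_sum_pderiv_mul_pb_u]
  refine sum_eq_zero fun a _ => sum_eq_zero fun b _ => ?_
  by_cases hab : a ∈ Set.range e ∧ b ∈ Set.range e
  · obtain ⟨i, rfl⟩ := hef hab.1
    obtain ⟨j, rfl⟩ := hef hab.2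
    rw [pb_u_coeff_charpoly_submatrix hf, mul_zero]
  · rw [pderiv_coeff_charpoly_submatrix_eq_zero e (not_and_or.1 hab), zero_mul]

theorem Ipoly_eq_charpoly {k : ℕ} (hk : k ≤ N) :
    Ipoly k hk = ((Umat N).submatrix (Fin.castLE hk) (Fin.castLE hk)).charpoly := by
  rw [charpoly, charmatrix_submatrix _ (Fin.castLE_injective hk), Ipoly]

theorem pb_coeff_Ipoly_of_le {k l : ℕ} (hk : k ≤ N) (hl : l ≤ N) (hkl : k ≤ l) (m n : ℕ) :
    pb ((Ipoly k hk).coeff m) ((Ipoly l hl).coeff n) = 0 := by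
  rw [Ipoly_eq_charpoly, Ipoly_eq_charpoly]
  refine pb_coeff_charpoly_submatrix _ (Fin.castLE_injective hl) ?_ m n
  rintro _ ⟨i, rfl⟩
  exact ⟨Fin.castLE hkl i, rfl⟩

theorem pb_coeff_Ipoly {k l : ℕ} (hk : k ≤ N) (hl : l ≤ N) (m n : ℕ) :
    pb ((Ipoly k hk).coeff m) ((Ipoly l hl).coeff n) = 0 := by
  rcases le_total k l with hkl | hlk
  · exact pb_coeff_Ipoly_of_le hk hl hkl m n
  · rw [pb_antisymm, pb_coeff_Ipoly_of_le hl hk hlk, neg_zero]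

end LiePoisson

theorem poisson_commutative_subalgebra_and_count (N : ℕ) :
    (∃ S : Subalgebra ℝ (MvPolynomial (Fin N × Fin N) ℝ),
      (∀ p ∈ S, ∀ q ∈ S, pb p q = 0) ∧
      ∀ k : ℕ, ∀ hk1 : 1 ≤ k, ∀ hk : k ≤ N, ∀ m : ℕ,
        (Ipoly k hk).coeff m ∈ S) ∧
    ∑ k ∈ Finset.Icc 1 N, k = N * (N + 1) / 2 := by
  refine ⟨⟨Algebra.adjoin ℝ {x | ∃ (k : ℕ) (hk : k ≤ N) (m : ℕ), x = (Ipoly k hk).coeff m},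
    ?_, fun k _ hk m => Algebra.subset_adjoin ⟨k, hk, m, rfl⟩⟩, Finset.sum_Icc_one_id N⟩
  intro p hp q hq
  refine pb_eq_zero_of_mem_adjoin ?_ hp hq
  rintro _ ⟨k, hk, m, rfl⟩ _ ⟨l, hl, n, rfl⟩
  exact pb_coeff_Ipoly hk hl m n
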